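/- arXiv:2304.10078 — 3 statements merged into one kernel-verified Lean document; each statement's English description precedes it below -/
import Mathlib

section
/- Let A be a sequence of n records partitioned into m subarrays of length l = n/m, and let bucket : record → Fin B assign each record a bucket. Define C[i][j] as the number of records in subarray i with bucket j, and X[i][j] = Σ over pairs (i',j') with j' < j, or (j' = j and i' < i), of C[i'][j']. Then the map sending the r-th record of bucket j within subarray i (0-indexed, in subarray order) to position X[i][j] + r is a bijection from the n records to positions {0, …, n−1}. -/
/-!
The slot `X i j + r` assigned to a record `p` is its rank, i.e. the number of records strictly
below it, in the lexicographic order by (bucket, subarray, position): `X i j` counts the records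
in earlier buckets or in earlier subarrays of the same bucket, and `r` the earlier records of the
same bucket and subarray. That key is injective, and the ranks of the elements of a finite
linearly ordered set of size `n` are exactly `0, …, n - 1`.
-/

open Finset

section Rank

variable {α β : Type*} [Fintype α] [LinearOrder β] (f : α → β)

lemma card_filter_lt_lt_of_lt {p p' : α} (h : f p < f p') :
    #{q | f q < f p} < #{q | f q < f p'} :=
  card_lt_card <| (ssubset_iff_of_subset fun q hq => by
    simp only [mem_filter, mem_univ, true_and] at hq ⊢; exact hq.trans h).2
    ⟨p, by simpa using h, by simp⟩

lemma card_filter_lt_lt_card (p : α) : #{q | f q < f p} < Fintype.card α :=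
  card_lt_univ_of_notMem (x := p) (by simp)

lemma injective_card_filter_lt {f : α → β} (hf : Function.Injective f) :
    Function.Injective fun p => #{q | f q < f p} := by
  intro p p' h
  by_contra hne
  rcases (hf.ne hne).lt_or_gt with hlt | hlt
  · exact (card_filter_lt_lt_of_lt f hlt).ne h
  · exact (card_filter_lt_lt_of_lt f hlt).ne' h

theorem bijOn_card_filter_lt {f : α → β} (hf : Function.Injective f) :
    Set.BijOn (fun p => #{q | f q < f p}) Set.univ (Set.Iio (Fintype.card α)) := by
  let rank : α → Fin (Fintype.card α) := fun p => ⟨_, card_filter_lt_lt_card f p⟩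
  have hrank : Function.Bijective rank :=
    (Fintype.bijective_iff_injective_and_card rank).2
      ⟨fun p p' h => injective_card_filter_lt hf (Fin.val_eq_of_eq h), by simp⟩
  refine ⟨fun p _ => card_filter_lt_lt_card f p,
    (injective_card_filter_lt hf).injOn, fun x hx => ?_⟩
  obtain ⟨p, hp⟩ := hrank.2 ⟨x, hx⟩
  exact ⟨p, trivial, congrArg Fin.val hp⟩

end Rank

lemma sum_card_fiber_lex_eq_card {α : Type*} [Fintype α] {m B : ℕ} (blk bucket : α → ℕ)
    (hblk : ∀ p, blk p < m) (hB : ∀ p, bucket p < B) (i j : ℕ) :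
    ∑ x ∈ (range m ×ˢ range B).filter (fun x => x.2 < j ∨ (x.2 = j ∧ x.1 < i)),
        #{p | blk p = x.1 ∧ bucket p = x.2} =
      #{p | bucket p < j ∨ (bucket p = j ∧ blk p < i)} := by
  rw [card_eq_sum_card_fiberwise (f := fun p => (blk p, bucket p))]
  · refine sum_congr rfl fun ⟨a, b⟩ hx => ?_
    rw [filter_filter]
    refine congrArg card (filter_congr fun p _ => ?_)
    simp only [mem_filter] at hx
    constructor
    · rintro ⟨rfl, rfl⟩
      exact ⟨hx.2, rfl⟩
    · rintro ⟨-, h⟩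
      exact Prod.ext_iff.1 h
  · intro p hp
    simp_all

lemma card_filter_toLex_lt {α : Type*} [Fintype α] [LinearOrder α] (blk bucket : α → ℕ) (p : α) :
    #{q | toLex (bucket q, toLex (blk q, q)) < toLex (bucket p, toLex (blk p, p))} =
      #{q | bucket q < bucket p ∨ (bucket q = bucket p ∧ blk q < blk p)} +
        #{q | blk q = blk p ∧ bucket q = bucket p ∧ q < p} := by
  rw [← card_union_of_disjoint (disjoint_filter.2 fun q _ h h' => by omega), ← filter_or]
  refine congrArg card (filter_congr fun q _ => ?_)
  simp only [Prod.Lex.toLex_lt_toLex]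
  tauto

/-- Correctness of the blocked distributing step: with `n = m * l` records split
into `m` subarrays of length `l`, a bucket assignment `bucket`, the counting
matrix `C` and its column-major prefix sum `X`, the map sending the `r`-th
record (in subarray order) of bucket `j` within subarray `i` to position
`X i j + r` is a bijection from the `n` records onto positions `{0, …, n-1}`. -/
theorem blocked_distributing_bijective (n m l B : ℕ) (hn : n = m * l)
    (bucket : Fin n → ℕ) (hB : ∀ p, bucket p < B)
    (C X : ℕ → ℕ → ℕ)
    (hC : ∀ i j, C i j =
      ((Finset.univ : Finset (Fin n)).filter
        (fun p : Fin n => (p : ℕ) / l = i ∧ bucket p = j)).card)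
    (hX : ∀ i j, X i j =
      ∑ q ∈ (Finset.range m ×ˢ Finset.range B).filter
        (fun q => q.2 < j ∨ (q.2 = j ∧ q.1 < i)), C q.1 q.2) :
    Set.BijOn
      (fun p : Fin n =>
        X ((p : ℕ) / l) (bucket p) +
          ((Finset.univ : Finset (Fin n)).filter
            (fun q : Fin n => (q : ℕ) / l = (p : ℕ) / l ∧ bucket q = bucket p ∧
              (q : ℕ) < (p : ℕ))).card)
      Set.univ (Set.Iio n) := by
  have hblk (p : Fin n) : (p : ℕ) / l < m :=
    Nat.div_lt_of_lt_mul (by rw [mul_comm, ← hn]; exact p.isLt)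
  have hkey : Function.Injective fun p : Fin n => toLex (bucket p, toLex ((p : ℕ) / l, p)) :=
    fun p p' h => by simpa using congrArg (fun x => (ofLex (ofLex x).2).2) h
  convert bijOn_card_filter_lt hkey using 1
  · funext p
    simp only [hX, hC, sum_card_fiber_lex_eq_card _ _ hblk hB, card_filter_toLex_lt]
    rfl
  · simp
end

section
/- With C and X as in the blocked distributing step, for every bucket j the set of output positions assigned to records of bucket j is exactly the contiguous interval [Σ_{j'<j} Σ_i C[i][j'], Σ_{j'≤j} Σ_i C[i][j']). In particular, all records with the same bucket id are contiguous in the output. -/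
/-- With `C` and `X` as in the blocked distributing step, for every bucket `j`
the set of output positions assigned to records of bucket `j` is exactly the
contiguous interval `[Σ_{j'<j} Σ_i C[i][j'], Σ_{j'≤j} Σ_i C[i][j'])`; in
particular, all records with the same bucket id are contiguous in the output. -/
theorem blocked_distributing_bucket_contiguous (n m l B : ℕ) (hn : n = m * l)
    (bucket : Fin n → ℕ) (hB : ∀ p, bucket p < B)
    (C X : ℕ → ℕ → ℕ)
    (hC : ∀ i j, C i j =
      ((Finset.univ : Finset (Fin n)).filter
        (fun p : Fin n => (p : ℕ) / l = i ∧ bucket p = j)).card)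
    (hX : ∀ i j, X i j =
      ∑ q ∈ (Finset.range m ×ˢ Finset.range B).filter
        (fun q => q.2 < j ∨ (q.2 = j ∧ q.1 < i)), C q.1 q.2)
    (pos : Fin n → ℕ)
    (hpos : ∀ p, pos p =
      X ((p : ℕ) / l) (bucket p) +
        ((Finset.univ : Finset (Fin n)).filter
          (fun q : Fin n => (q : ℕ) / l = (p : ℕ) / l ∧ bucket q = bucket p ∧
            (q : ℕ) < (p : ℕ))).card) :
    ∀ j < B,
      pos '' {p : Fin n | bucket p = j} =
        Set.Ico (∑ j' ∈ Finset.range j, ∑ i ∈ Finset.range m, C i j')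
          (∑ j' ∈ Finset.range (j + 1), ∑ i ∈ Finset.range m, C i j') := by
  intro j hj
  have hdiv : ∀ p : Fin n, (p : ℕ) / l < m := by
    intro p
    rcases Nat.eq_zero_or_pos l with hl | hl
    · exfalso
      have hn0 : n = 0 := by rw [hn, hl, Nat.mul_zero]
      have hp := p.isLt
      omega
    · have hp : (p : ℕ) < l * m := Nat.lt_of_lt_of_le p.isLt (Nat.le_of_eq (by rw [hn, Nat.mul_comm]))
      exact Nat.div_lt_of_lt_mul hp
  -- ordering fact
  have hqlt : ∀ p q : Fin n, (q : ℕ) < (p : ℕ) ↔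
      ((q : ℕ) / l < (p : ℕ) / l ∨ ((q : ℕ) / l = (p : ℕ) / l ∧ (q : ℕ) < (p : ℕ))) := by
    intro p q
    constructor
    · intro h
      have := Nat.div_le_div_right (c := l) (Nat.le_of_lt h)
      omega
    · rintro (h | ⟨_, h⟩)
      · by_contra hc
        have := Nat.div_le_div_right (c := l) (Nat.le_of_not_lt hc)
        omega
      · exact h
  -- over all blocks, the counts add up to the bucket size
  have hcard : ∀ j', (Finset.univ.filter (fun p : Fin n => bucket p = j')).card
      = ∑ i ∈ Finset.range m, C i j' := by
    intro j'
    rw [Finset.card_eq_sum_card_fiberwise (f := fun p : Fin n => (p : ℕ) / l)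
      (t := Finset.range m) (fun p _ => Finset.mem_range.2 (hdiv p))]
    refine Finset.sum_congr rfl fun i _ => ?_
    rw [hC]
    congr 1
    ext q
    simp only [Finset.mem_filter, Finset.mem_univ, true_and]
    tauto
  -- partial sums of C in one column count records in earlier blocks
  have hpartial : ∀ i, ∑ i' ∈ Finset.range i, C i' j =
      (Finset.univ.filter (fun q : Fin n => bucket q = j ∧ (q : ℕ) / l < i)).card := by
    intro i
    rw [Finset.card_eq_sum_card_fiberwise (f := fun q : Fin n => (q : ℕ) / l)
      (t := Finset.range i) (fun q hq => Finset.mem_range.2 (Finset.mem_filter.1 hq).2.2)]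
    refine Finset.sum_congr rfl fun i' hi' => ?_
    rw [hC]
    congr 1
    ext q
    simp only [Finset.mem_filter, Finset.mem_univ, true_and, Finset.mem_range] at hi' ⊢
    constructor
    · rintro ⟨h1, h2⟩; exact ⟨⟨h2, by omega⟩, h1⟩
    · tauto
  set A := ∑ j' ∈ Finset.range j, ∑ i ∈ Finset.range m, C i j' with hA
  -- splitting X
  have hXsplit : ∀ p : Fin n, X ((p : ℕ) / l) j =
      A + ∑ i' ∈ Finset.range ((p : ℕ) / l), C i' j := by
    intro p
    have hi : (p : ℕ) / l < m := hdiv p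
    set i := (p : ℕ) / l
    rw [hX]
    have hset : (Finset.range m ×ˢ Finset.range B).filter
        (fun q => q.2 < j ∨ (q.2 = j ∧ q.1 < i)) =
        (Finset.range m ×ˢ Finset.range j) ∪ (Finset.range i ×ˢ {j}) := by
      ext ⟨a, b⟩
      simp only [Finset.mem_filter, Finset.mem_product, Finset.mem_range, Finset.mem_union,
        Finset.mem_singleton]
      omega
    have hdisj : Disjoint (Finset.range m ×ˢ Finset.range j)
        (Finset.range i ×ˢ ({j} : Finset ℕ)) := by
      rw [Finset.disjoint_left]
      rintro ⟨a, b⟩ ha hb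
      simp only [Finset.mem_product, Finset.mem_range, Finset.mem_singleton] at ha hb
      omega
    rw [hset, Finset.sum_union hdisj, Finset.sum_product, Finset.sum_product]
    simp only [Finset.sum_singleton]
    rw [Finset.sum_comm]
  -- pos as global rank
  have hrank : ∀ p : Fin n, bucket p = j → pos p =
      A + (Finset.univ.filter (fun q : Fin n => bucket q = j ∧ (q : ℕ) < (p : ℕ))).card := by
    intro p hp
    rw [hpos, hp, hXsplit p, hpartial, add_assoc]
    congr 1
    rw [← Finset.card_union_of_disjoint (by
      rw [Finset.disjoint_left]
      intro q hq hq'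
      simp only [Finset.mem_filter, Finset.mem_univ, true_and] at hq hq'
      omega)]
    congr 1
    ext q
    simp only [Finset.mem_union, Finset.mem_filter, Finset.mem_univ, true_and]
    have := hqlt p q
    tauto
  have hsum : ∑ j' ∈ Finset.range (j + 1), ∑ i ∈ Finset.range m, C i j' =
      A + (Finset.univ.filter (fun p : Fin n => bucket p = j)).card := by
    rw [Finset.sum_range_succ, ← hA, hcard]
  set K := (Finset.univ.filter (fun p : Fin n => bucket p = j)).card with hK
  rw [hsum]
  ext x
  simp only [Set.mem_image, Set.mem_setOf_eq, Set.mem_Ico]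
  constructor
  · rintro ⟨p, hp, rfl⟩
    rw [hrank p hp]
    constructor
    · exact Nat.le_add_right _ _
    · have hsub : Finset.univ.filter (fun q : Fin n => bucket q = j ∧ (q : ℕ) < (p : ℕ)) ⊆
          Finset.univ.filter (fun q : Fin n => bucket q = j) := by
        intro q hq
        simp only [Finset.mem_filter, Finset.mem_univ, true_and] at hq ⊢
        exact hq.1
      have hss : Finset.univ.filter (fun q : Fin n => bucket q = j ∧ (q : ℕ) < (p : ℕ)) ⊂
          Finset.univ.filter (fun q : Fin n => bucket q = j) := by
        refine (Finset.ssubset_iff_of_subset hsub).2 ⟨p, ?_, ?_⟩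
        · simp [hp]
        · simp
      exact Nat.add_lt_add_left (Finset.card_lt_card hss) A
  · rintro ⟨h1, h2⟩
    have ht : x - A < K := by omega
    set t : Fin K := ⟨x - A, ht⟩ with htdef
    let f := (Finset.univ.filter (fun p : Fin n => bucket p = j)).orderIsoOfFin hK.symm
    set p : Fin n := (f t : Fin n) with hpdef
    have hpmem : p ∈ Finset.univ.filter (fun p : Fin n => bucket p = j) := (f t).2
    have hpb : bucket p = j := (Finset.mem_filter.1 hpmem).2
    refine ⟨p, hpb, ?_⟩
    rw [hrank p hpb]
    have himg : Finset.univ.filter (fun q : Fin n => bucket q = j ∧ (q : ℕ) < (p : ℕ)) =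
        (Finset.Iio t).image (fun s => ((f s : Fin n))) := by
      ext q
      simp only [Finset.mem_filter, Finset.mem_univ, true_and, Finset.mem_image,
        Finset.mem_Iio]
      constructor
      · rintro ⟨hbj, hlt⟩
        refine ⟨f.symm ⟨q, by simp [hbj]⟩, ?_, by simp⟩
        rw [← f.lt_iff_lt, OrderIso.apply_symm_apply]
        exact Subtype.mk_lt_mk.2 (Fin.lt_def.2 hlt)
      · rintro ⟨s, hs, rfl⟩
        refine ⟨(Finset.mem_filter.1 (f s).2).2, ?_⟩
        have : f s < f t := f.lt_iff_lt.2 hs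
        exact Fin.lt_def.1 (Subtype.mk_lt_mk.1 (by exact this))
    rw [himg, Finset.card_image_of_injective _
      (fun a b h => f.injective (Subtype.coe_injective h)), Fin.card_Iio]
    simp only [htdef]
    omega
end

section
/- The blocked distribution is stable: if two records a, b in the input have the same bucket id and a precedes b in the input order, then the output position of a is strictly less than the output position of b. -/
/-!
Within one bucket, records are placed subarray by subarray, and inside a subarray by rank.
If `a` and `b` lie in the same subarray, they share the offset `X` and `a` has the smaller rank.
Otherwise the whole block of `a`'s subarray, of size `C`, ends no later than the offset of
`b`'s subarray, while the rank of `a` is less than `C`.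
-/

open Finset

section Rank

variable {α : Type*} [LinearOrder α] {s : Finset α} {a b : α}

theorem Finset.card_filter_lt_lt_card (ha : a ∈ s) : #(s.filter (· < a)) < #s :=
  card_lt_card (filter_ssubset.2 ⟨a, ha, lt_irrefl a⟩)

theorem Finset.card_filter_lt_lt_card_filter_lt (ha : a ∈ s) (hab : a < b) :
    #(s.filter (· < a)) < #(s.filter (· < b)) := by
  refine card_lt_card (ssubset_iff_of_subset ?_ |>.2 ⟨a, mem_filter.2 ⟨ha, hab⟩, ?_⟩)
  · exact monotone_filter_right s fun _ _ hx => hx.trans hab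
  · simp

end Rank

def bucketMajorPrefix (m B i j : ℕ) : Finset (ℕ × ℕ) :=
  (range m ×ˢ range B).filter (fun q => q.2 < j ∨ (q.2 = j ∧ q.1 < i))

theorem notMem_bucketMajorPrefix (m B i j : ℕ) : (i, j) ∉ bucketMajorPrefix m B i j := by
  simp [bucketMajorPrefix]

theorem insert_bucketMajorPrefix_subset {m B i i' j : ℕ} (hi : i < m) (hj : j < B)
    (hii' : i < i') : insert (i, j) (bucketMajorPrefix m B i j) ⊆ bucketMajorPrefix m B i' j := by
  intro q hq
  simp only [bucketMajorPrefix, mem_insert, mem_filter, mem_product, mem_range] at hq ⊢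
  rcases hq with rfl | ⟨hq, hlt⟩
  · exact ⟨⟨hi, hj⟩, Or.inr ⟨rfl, hii'⟩⟩
  · exact ⟨hq, by omega⟩

theorem sum_bucketMajorPrefix_add_le {M : Type*} [AddCommMonoid M] [Preorder M]
    [CanonicallyOrderedAdd M] (C : ℕ → ℕ → M) {m B i i' j : ℕ} (hi : i < m) (hj : j < B)
    (hii' : i < i') :
    ∑ q ∈ bucketMajorPrefix m B i j, C q.1 q.2 + C i j ≤
      ∑ q ∈ bucketMajorPrefix m B i' j, C q.1 q.2 := by
  rw [add_comm,
    ← sum_insert (f := fun q : ℕ × ℕ => C q.1 q.2) (notMem_bucketMajorPrefix m B i j)]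
  exact sum_le_sum_of_subset (insert_bucketMajorPrefix_subset hi hj hii')

/-- Stability of blocked distribution: if two records `a`, `b` in the input have
the same bucket id and `a` precedes `b` in input order, then the output position
of `a` is strictly less than that of `b`. -/
theorem blocked_distributing_stable (n m l B : ℕ) (hn : n = m * l)
    (bucket : Fin n → ℕ) (hB : ∀ p, bucket p < B)
    (C X : ℕ → ℕ → ℕ)
    (hC : ∀ i j, C i j =
      ((Finset.univ : Finset (Fin n)).filter
        (fun p : Fin n => (p : ℕ) / l = i ∧ bucket p = j)).card)
    (hX : ∀ i j, X i j =
      ∑ q ∈ (Finset.range m ×ˢ Finset.range B).filter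
        (fun q => q.2 < j ∨ (q.2 = j ∧ q.1 < i)), C q.1 q.2)
    (pos : Fin n → ℕ)
    (hpos : ∀ p, pos p =
      X ((p : ℕ) / l) (bucket p) +
        ((Finset.univ : Finset (Fin n)).filter
          (fun q : Fin n => (q : ℕ) / l = (p : ℕ) / l ∧ bucket q = bucket p ∧
            (q : ℕ) < (p : ℕ))).card) :
    ∀ a b : Fin n, bucket a = bucket b → a < b → pos a < pos b := by
  intro a b hbucket hab
  let cell (i j : ℕ) : Finset (Fin n) := univ.filter fun p => (p : ℕ) / l = i ∧ bucket p = j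
  have hrank (p : Fin n) :
      pos p = X (p / l) (bucket p) + #((cell (p / l) (bucket p)).filter (· < p)) := by
    rw [hpos, filter_filter]
    simp only [and_assoc, Fin.lt_def]
  have ha : a ∈ cell (a / l) (bucket a) := by simp [cell]
  have hl : 0 < l := Nat.pos_of_ne_zero fun h => by have := a.2; simp_all
  have ham : (a : ℕ) / l < m := (Nat.div_lt_iff_lt_mul hl).2 (hn ▸ a.2)
  rw [hrank a, hrank b, ← hbucket]
  rcases (Nat.div_le_div_right (c := l) hab.le).eq_or_lt with hsame | hearlier
  · rw [← hsame]
    exact Nat.add_lt_add_left (card_filter_lt_lt_card_filter_lt ha hab) _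
  · calc X (a / l) (bucket a) + #((cell (a / l) (bucket a)).filter (· < a))
        < X (a / l) (bucket a) + C (a / l) (bucket a) :=
          Nat.add_lt_add_left (hC .. ▸ card_filter_lt_lt_card ha) _
      _ ≤ X (b / l) (bucket a) := by
          rw [hX, hX]
          exact sum_bucketMajorPrefix_add_le C ham (hB a) hearlier
      _ ≤ _ := Nat.le_add_right _ _
end
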